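/- The orbit {w(û₂) : w ∈ W(E₆)} of the unit vector û₂ under the Weyl group W(E₆) is a finite set with exactly 27 elements. (Equivalently: the Coxeter complex of type E₆ has exactly 27 vertices of type 2, the number |W(E₆)|/|W(D₅)| = 3³.) -/

import Mathlib

noncomputable section

open scoped RealInnerProductSpace

/-- Euclidean space `ℝ⁸`. -/
abbrev E8Space := EuclideanSpace ℝ (Fin 8)

/-- The fundamental root vectors of the root system of type `E₆` inside `ℝ⁸`:
`r₁ = ½(1,1,1,−1,−1,−1,−1,−1)`, `rᵢ = eᵢ − eᵢ₋₁` for `2 ≤ i ≤ 5`, and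
`r₆ = ½(1,1,1,1,−1,1,1,1)` (here indexed by `Fin 6`, with `j = 0` corresponding
to `r₁` and `j = 5` to `r₆`). -/
def E6root : Fin 6 → E8Space := fun j =>
  if j = 0 then WithLp.toLp 2 (fun i => if (i : ℕ) < 3 then (1 : ℝ) / 2 else -(1 / 2))
  else if j = 5 then WithLp.toLp 2 (fun i => if (i : ℕ) = 4 then -(1 : ℝ) / 2 else 1 / 2)
  else WithLp.toLp 2 (fun i => if (i : ℕ) = (j : ℕ) then (1 : ℝ)
        else if (i : ℕ) + 1 = (j : ℕ) then -1 else 0)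

/-- The Weyl group `W(E₆)`: the subgroup of linear isometries of `ℝ⁸` generated by the
reflections `s_r(x) = x − 2(⟨x,r⟩/⟨r,r⟩)r` in the fundamental root vectors of type `E₆`.
These generators preserve the subspace `V = {x : x₆ = x₇ = x₈}` realizing the Coxeter
complex of type `E₆`. -/
def WeylE6 : Subgroup (E8Space ≃ₗᵢ[ℝ] E8Space) :=
  Subgroup.closure
    { f | ∃ j : Fin 6, ∀ x : E8Space,
        f x = x - ((2 * ⟪x, E6root j⟫ / ⟪E6root j, E6root j⟫) • E6root j) }

/-- `û₂ = (−3,3,3,3,3,−1,−1,−1)/(4√3)`, a unit vector representing a vertex of type 2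
of the Coxeter complex of type `E₆`. -/
def u2hatE6 : E8Space := WithLp.toLp 2 (fun i =>
  (if (i : ℕ) = 0 then -3 else if (i : ℕ) < 5 then 3 else -1) / (4 * Real.sqrt 3))

/-- `û₆ = (3,3,3,3,3,1,1,1)/(4√3)`, a unit vector representing a vertex of type 6
of the Coxeter complex of type `E₆`. -/
def u6hatE6 : E8Space := WithLp.toLp 2 (fun i =>
  (if (i : ℕ) < 5 then 3 else 1) / (4 * Real.sqrt 3))
/-!
Every simple reflection permutes the 27 vectors `(4√3)⁻¹ • v`, where `v` runs through an
explicit list of integer vectors starting with `4√3 • û₂`; after doubling the roots, the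
reflection formula stays inside `ℤ⁸`, so this is a finite computation. Being finite, the set is
then stable under the whole group `W(E₆)`, so it contains the orbit. Conversely, each listed
vector is the image of an earlier one under a simple reflection, so all 27 lie in the orbit.
-/

open Matrix
open scoped Pointwise

namespace LinearIsometryEquiv

variable {R E : Type*} [Semiring R] [SeminormedAddCommGroup E] [Module R E]

instance applyMulAction : MulAction (E ≃ₗᵢ[R] E) E where
  smul f x := f x
  one_smul _ := rfl
  mul_smul _ _ _ := rfl

end LinearIsometryEquiv

theorem Set.Finite.smul_mem_of_mem_closure {G α : Type*} [Group G] [MulAction G α] {S : Set G}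
    {A : Set α} (hA : A.Finite) (hS : ∀ s ∈ S, ∀ a ∈ A, s • a ∈ A) {g : G}
    (hg : g ∈ Subgroup.closure S) {a : α} (ha : a ∈ A) : g • a ∈ A := by
  have hstab : Subgroup.closure S ≤ MulAction.stabilizer G A :=
    (Subgroup.closure_le _).2 fun s hs => (MulAction.mem_stabilizer_set' hA).2 (hS s hs)
  exact (MulAction.mem_stabilizer_set' hA).1 (hstab hg) ha

theorem Submodule.reflection_orthogonal_span_singleton_apply {E : Type*} [NormedAddCommGroup E]
    [InnerProductSpace ℝ E] (r x : E) :
    (ℝ ∙ r)ᗮ.reflection x = x - (2 * ⟪x, r⟫ / ⟪r, r⟫) • r := by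
  rw [Submodule.reflection_orthogonal_apply, Submodule.reflection_singleton_apply,
    real_inner_comm r x, neg_sub]
  simp only [RCLike.ofReal_real_eq_id, id_eq]
  rw [← real_inner_self_eq_norm_sq]
  match_scalars <;> ring

section IntegerVectors

variable {n : ℕ}

def intToEuclidean (v : Fin n → ℤ) : EuclideanSpace ℝ (Fin n) :=
  WithLp.toLp 2 fun i => (v i : ℝ)

theorem intToEuclidean_injective : Function.Injective (intToEuclidean (n := n)) := by
  intro v w h
  funext i
  have hi := congrArg (fun x : EuclideanSpace ℝ (Fin n) => x i) h
  simpa [intToEuclidean] using hi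

theorem inner_intToEuclidean (v w : Fin n → ℤ) :
    ⟪intToEuclidean v, intToEuclidean w⟫ = ((v ⬝ᵥ w : ℤ) : ℝ) := by
  simp [intToEuclidean, dotProduct, PiLp.inner_apply, mul_comm]

theorem intToEuclidean_sub_smul (v w : Fin n → ℤ) (a : ℤ) :
    intToEuclidean (v - a • w) = intToEuclidean v - (a : ℝ) • intToEuclidean w := by
  ext i
  simp [intToEuclidean]

def intReflection (r v : Fin n → ℤ) : Fin n → ℤ :=
  v - (2 * (v ⬝ᵥ r) / (r ⬝ᵥ r)) • r

theorem reflection_intToEuclidean {r v : Fin n → ℤ} (hv : r ⬝ᵥ r ∣ 2 * (v ⬝ᵥ r)) :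
    (ℝ ∙ intToEuclidean r)ᗮ.reflection (intToEuclidean v) =
      intToEuclidean (intReflection r v) := by
  obtain ⟨q, hq⟩ := hv
  rcases eq_or_ne (r ⬝ᵥ r) 0 with hr | hr
  · simp only [Submodule.reflection_orthogonal_span_singleton_apply, inner_intToEuclidean, hr]
    simp [intReflection, hr]
  have hcoeff :
      2 * ((v ⬝ᵥ r : ℤ) : ℝ) / ((r ⬝ᵥ r : ℤ) : ℝ) = ((2 * (v ⬝ᵥ r) / (r ⬝ᵥ r) : ℤ) : ℝ) := by
    rw [hq, Int.mul_ediv_cancel_left _ hr, div_eq_iff (by exact_mod_cast hr)]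
    exact_mod_cast hq.trans (mul_comm _ _)
  rw [Submodule.reflection_orthogonal_span_singleton_apply, inner_intToEuclidean,
    inner_intToEuclidean, hcoeff, intReflection, intToEuclidean_sub_smul]

end IntegerVectors

namespace CoxeterE6

def rootZ : Fin 6 → Fin 8 → ℤ := fun j =>
  if j = 0 then (fun i => if (i : ℕ) < 3 then 1 else -1)
  else if j = 5 then (fun i => if (i : ℕ) = 4 then -1 else 1)
  else (fun i => if (i : ℕ) = (j : ℕ) then 2
        else if (i : ℕ) + 1 = (j : ℕ) then -2 else 0)

/-- The orbit of `û₂` scaled by `4√3`, in breadth-first order from `4√3 • û₂`. -/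
def orbitZ : Fin 27 → Fin 8 → ℤ :=
  ![![-3, 3, 3, 3, 3, -1, -1, -1],
    ![3, -3, 3, 3, 3, -1, -1, -1],
    ![3, 3, -3, 3, 3, -1, -1, -1],
    ![3, 3, 3, -3, 3, -1, -1, -1],
    ![0, 0, 0, 0, 6, 2, 2, 2],
    ![3, 3, 3, 3, -3, -1, -1, -1],
    ![0, 0, 0, 6, 0, 2, 2, 2],
    ![0, 0, 0, 0, 0, -4, -4, -4],
    ![0, 0, 6, 0, 0, 2, 2, 2],
    ![-3, -3, -3, 3, 3, -1, -1, -1],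
    ![0, 6, 0, 0, 0, 2, 2, 2],
    ![-3, -3, 3, -3, 3, -1, -1, -1],
    ![6, 0, 0, 0, 0, 2, 2, 2],
    ![-3, 3, -3, -3, 3, -1, -1, -1],
    ![-3, -3, 3, 3, -3, -1, -1, -1],
    ![3, -3, -3, -3, 3, -1, -1, -1],
    ![-3, 3, -3, 3, -3, -1, -1, -1],
    ![3, -3, -3, 3, -3, -1, -1, -1],
    ![-3, 3, 3, -3, -3, -1, -1, -1],
    ![3, -3, 3, -3, -3, -1, -1, -1],
    ![-6, 0, 0, 0, 0, 2, 2, 2],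
    ![0, -6, 0, 0, 0, 2, 2, 2],
    ![3, 3, -3, -3, -3, -1, -1, -1],
    ![0, 0, -6, 0, 0, 2, 2, 2],
    ![0, 0, 0, -6, 0, 2, 2, 2],
    ![0, 0, 0, 0, -6, 2, 2, 2],
    ![-3, -3, -3, -3, -3, -1, -1, -1]]

theorem orbitZ_injective : Function.Injective orbitZ := by decide

theorem rootZ_dvd_dotProduct : ∀ j k, rootZ j ⬝ᵥ rootZ j ∣ 2 * (orbitZ k ⬝ᵥ rootZ j) := by
  decide

set_option maxRecDepth 10000 in
theorem exists_intReflection_orbitZ_eq :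
    ∀ j k, ∃ k', intReflection (rootZ j) (orbitZ k) = orbitZ k' := by
  decide

set_option maxRecDepth 10000 in
theorem exists_intReflection_orbitZ_lt_eq :
    ∀ k : Fin 27, k ≠ 0 → ∃ j, ∃ p < k, intReflection (rootZ j) (orbitZ p) = orbitZ k := by
  decide

theorem E6root_eq (j : Fin 6) : E6root j = (2 : ℝ)⁻¹ • intToEuclidean (rootZ j) := by
  ext i
  fin_cases j <;> fin_cases i <;>
    simp +decide only [E6root, rootZ, intToEuclidean, PiLp.smul_apply] <;> norm_num

def simpleReflection (j : Fin 6) : E8Space ≃ₗᵢ[ℝ] E8Space :=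
  (ℝ ∙ intToEuclidean (rootZ j))ᗮ.reflection

theorem simpleReflection_apply (j : Fin 6) (x : E8Space) :
    simpleReflection j x = x - ((2 * ⟪x, E6root j⟫ / ⟪E6root j, E6root j⟫) • E6root j) := by
  rw [simpleReflection, Submodule.reflection_orthogonal_span_singleton_apply, E6root_eq,
    real_inner_smul_left, real_inner_smul_right, real_inner_smul_right, smul_smul]
  congr 2
  ring

theorem weylE6_eq_closure : WeylE6 = Subgroup.closure (Set.range simpleReflection) := by
  rw [WeylE6]
  congr 1
  ext f
  refine ⟨fun ⟨j, hj⟩ => ⟨j, ?_⟩, fun ⟨j, hj⟩ => ⟨j, hj ▸ simpleReflection_apply j⟩⟩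
  ext x
  rw [hj, simpleReflection_apply]

def orbitVec (k : Fin 27) : E8Space := (4 * Real.sqrt 3)⁻¹ • intToEuclidean (orbitZ k)

theorem orbitVec_injective : Function.Injective orbitVec :=
  (smul_right_injective E8Space (by positivity)).comp
    (intToEuclidean_injective.comp orbitZ_injective)

theorem u2hatE6_eq_orbitVec_zero : u2hatE6 = orbitVec 0 := by
  ext i
  fin_cases i <;> simp [u2hatE6, orbitVec, intToEuclidean, orbitZ, div_eq_inv_mul]

theorem simpleReflection_orbitVec {j : Fin 6} {k k' : Fin 27}
    (h : intReflection (rootZ j) (orbitZ k) = orbitZ k') :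
    simpleReflection j (orbitVec k) = orbitVec k' := by
  rw [orbitVec, map_smul, simpleReflection, reflection_intToEuclidean (rootZ_dvd_dotProduct j k),
    h, orbitVec]

theorem orbitVec_mem_orbit (k : Fin 27) : ∃ w ∈ WeylE6, w u2hatE6 = orbitVec k := by
  induction k using WellFoundedLT.induction with
  | ind k ih =>
    rcases eq_or_ne k 0 with rfl | hk
    · exact ⟨1, one_mem _, u2hatE6_eq_orbitVec_zero⟩
    obtain ⟨j, p, hpk, hp⟩ := exists_intReflection_orbitZ_lt_eq k hk
    obtain ⟨w, hw, hwp⟩ := ih p hpk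
    refine ⟨simpleReflection j * w, ?_, ?_⟩
    · exact mul_mem (Subgroup.subset_closure ⟨j, simpleReflection_apply j⟩) hw
    · rw [LinearIsometryEquiv.coe_mul, Function.comp_apply, hwp, simpleReflection_orbitVec hp]

theorem orbit_u2hatE6_eq : {v : E8Space | ∃ w ∈ WeylE6, w u2hatE6 = v} = Set.range orbitVec := by
  ext v
  constructor
  · rintro ⟨w, hw, rfl⟩
    rw [weylE6_eq_closure] at hw
    refine Set.Finite.smul_mem_of_mem_closure (Set.toFinite _) ?_ hw
      ⟨0, u2hatE6_eq_orbitVec_zero.symm⟩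
    rintro _ ⟨j, rfl⟩ _ ⟨k, rfl⟩
    obtain ⟨k', hk'⟩ := exists_intReflection_orbitZ_eq j k
    exact ⟨k', (simpleReflection_orbitVec hk').symm⟩
  · rintro ⟨k, rfl⟩
    exact orbitVec_mem_orbit k

end CoxeterE6

theorem card_orbit_u2hatE6 :
    ({v : E8Space | ∃ w ∈ WeylE6, w u2hatE6 = v}).Finite ∧
    ({v : E8Space | ∃ w ∈ WeylE6, w u2hatE6 = v}).ncard = 27 := by
  rw [CoxeterE6.orbit_u2hatE6_eq]
  refine ⟨Set.finite_range _, ?_⟩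
  rw [Set.ncard_range_of_injective CoxeterE6.orbitVec_injective, Nat.card_eq_fintype_card,
    Fintype.card_fin]
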